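/- If A is positive definite and A B A^{-1} is unitary for some positive definite B, then B = I. -/

import Mathlib

open scoped ComplexOrder Matrix

/-!
Conjugating `A * B * A⁻¹` by `A` turns unitarity into `B * A ^ 2 * B = A ^ 2`, that is,
`(A * B * A) ^ 2 = (A ^ 2) ^ 2`. Both `A * B * A` and `A ^ 2` are positive semidefinite, and
positive semidefinite square roots are unique, so `A * B * A = A * A`; cancelling the invertible
`A` gives `B = 1`.
-/

namespace Matrix

variable {n : Type*} [Fintype n]

lemma conjTranspose_mul_mul_inv_of_isHermitian [DecidableEq n] {R : Type*} [CommRing R]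
    [StarRing R] {A B : Matrix n n R} (hA : A.IsHermitian) (hB : B.IsHermitian) :
    (A * B * A⁻¹)ᴴ = A⁻¹ * B * A := by
  simp only [conjTranspose_mul, conjTranspose_nonsing_inv, hA.eq, hB.eq, Matrix.mul_assoc]

lemma eq_mul_self_of_inv_mul_mul_inv_eq_one [DecidableEq n] {R : Type*} [CommRing R]
    {A M : Matrix n n R} (hA : IsUnit A.det) (h : A⁻¹ * M * A⁻¹ = 1) : M = A * A := by
  calc M = A * (A⁻¹ * M * A⁻¹) * A := by
        simp only [← Matrix.mul_assoc, mul_nonsing_inv _ hA, Matrix.one_mul,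
          Matrix.mul_assoc M, nonsing_inv_mul _ hA, Matrix.mul_one]
    _ = A * A := by rw [h, Matrix.mul_one]

variable {𝕜 : Type*} [RCLike 𝕜]

open scoped MatrixOrder in
lemma PosSemidef.eq_of_sq_eq_sq [DecidableEq n] {P Q : Matrix n n 𝕜} (hP : P.PosSemidef)
    (hQ : Q.PosSemidef) (h : P ^ 2 = Q ^ 2) : P = Q :=
  (CFC.sq_eq_sq_iff P Q hP.nonneg hQ.nonneg).mp h

lemma PosSemidef.mul_mul_of_isHermitian {A B : Matrix n n 𝕜} (hB : B.PosSemidef)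
    (hA : A.IsHermitian) : (A * B * A).PosSemidef := by
  simpa only [hA.eq] using hB.mul_mul_conjTranspose_same A

lemma IsHermitian.posSemidef_mul_self {A : Matrix n n 𝕜} (hA : A.IsHermitian) :
    (A * A).PosSemidef := by
  simpa only [hA.eq] using posSemidef_conjTranspose_mul_self A

end Matrix

open Matrix in
theorem stmt_8 {n : ℕ} (A B : Matrix (Fin n) (Fin n) ℂ)
    (hA : A.PosDef) (hB : B.PosDef)
    (hU : (A * B * A⁻¹)ᴴ * (A * B * A⁻¹) = 1) : B = 1 := by
  have hdet : IsUnit A.det := hA.det_pos.ne'.isUnit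
  rw [conjTranspose_mul_mul_inv_of_isHermitian hA.isHermitian hB.isHermitian] at hU
  have hBAAB : B * (A * A) * B = A * A :=
    eq_mul_self_of_inv_mul_mul_inv_eq_one hdet (by simpa only [Matrix.mul_assoc] using hU)
  have hsq : (A * B * A) ^ 2 = (A * A) ^ 2 :=
    calc (A * B * A) ^ 2 = A * (B * (A * A) * B) * A := by simp only [sq, Matrix.mul_assoc]
      _ = (A * A) ^ 2 := by rw [hBAAB]; simp only [sq, Matrix.mul_assoc]
  have hABA : A * B * A = A * A :=
    (hB.posSemidef.mul_mul_of_isHermitian hA.isHermitian).eq_of_sq_eq_sq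
      hA.isHermitian.posSemidef_mul_self hsq
  have hAu : IsUnit A := (isUnit_iff_isUnit_det A).mpr hdet
  exact hAu.mul_left_cancel (hAu.mul_right_cancel (by rwa [Matrix.mul_one]))
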